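/- arXiv:1106.3280 — 3 statements merged into one kernel-verified Lean document; each statement's English description precedes it below -/
import Mathlib

section
/- Let n ≥ 2 and k = log(n−1) + πi. The point Q = (b₁, ..., bₙ) with bⱼ = −k/n for 1 ≤ j ≤ n−1 and bₙ = k − k/n satisfies ∑ⱼ e^{bⱼ} = 0, ∑ⱼ bⱼ = 0, and its squared distance to the diagonal D equals |k|²(1 − 1/n). -/
/-!
`Q` is the orthogonal projection of `k • eₙ` onto the hyperplane `∑ zⱼ = 0`, which is the
orthogonal complement of the diagonal `D`; hence `dist(Q, D) = ‖Q‖`, and `‖Q‖²` is computed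
coordinatewise. The choice of `k` makes `e^k = -(n - 1)`, so
`∑ e^{bⱼ} = e^{-k/n} ((n - 1) + e^k) = 0`.
-/

open Complex

section Orthogonal

variable {𝕜 E : Type*} [RCLike 𝕜] [NormedAddCommGroup E] [InnerProductSpace 𝕜 E]

theorem norm_le_norm_sub_of_inner_eq_zero {x y : E} (h : inner 𝕜 x y = 0) : ‖x‖ ≤ ‖x - y‖ := by
  have hsq : ‖x - y‖ ^ 2 = ‖x‖ ^ 2 + ‖y‖ ^ 2 := by simp [@norm_sub_sq 𝕜, h]
  exact (pow_le_pow_iff_left₀ (norm_nonneg _) (norm_nonneg _) two_ne_zero).1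
    (by nlinarith [norm_nonneg y])

theorem Metric.infDist_eq_norm_of_inner_eq_zero {x : E} {s : Set E} (h0 : (0 : E) ∈ s)
    (h : ∀ y ∈ s, inner 𝕜 x y = 0) : Metric.infDist x s = ‖x‖ := by
  refine le_antisymm (by simpa using Metric.infDist_le_dist_of_mem (x := x) h0) ?_
  refine (Metric.le_infDist ⟨0, h0⟩).2 fun y hy => ?_
  rw [dist_eq_norm]
  exact norm_le_norm_sub_of_inner_eq_zero (h y hy)

end Orthogonal

theorem EuclideanSpace.infDist_diagonal_eq_norm_of_sum_eq_zero {𝕜 ι : Type*} [RCLike 𝕜]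
    [Fintype ι] {x : EuclideanSpace 𝕜 ι} (hx : ∑ j, x j = 0) :
    Metric.infDist x {p : EuclideanSpace 𝕜 ι | ∃ w : 𝕜, ∀ j, p j = w} = ‖x‖ := by
  refine Metric.infDist_eq_norm_of_inner_eq_zero (𝕜 := 𝕜) ⟨0, fun _ => rfl⟩ ?_
  rintro y ⟨w, hy⟩
  simp only [PiLp.inner_apply, RCLike.inner_apply, hy]
  rw [← Finset.mul_sum, ← map_sum, hx, map_zero, mul_zero]

theorem Complex.exp_log_add_pi_mul_I {r : ℝ} (hr : 0 < r) :
    exp (Real.log r + Real.pi * I) = -r := by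
  rw [exp_add_pi_mul_I, ← ofReal_exp, Real.exp_log hr]

theorem Fin.sum_ite_lt_last {M : Type*} [AddCommMonoid M] (m : ℕ) (a c : M) :
    ∑ j : Fin (m + 1), (if (j : ℕ) < m then a else c) = m • a + c := by
  simp [Fin.sum_univ_castSucc]

noncomputable def sumZeroProjLast (m : ℕ) (k : ℂ) (j : Fin (m + 1)) : ℂ :=
  if (j : ℕ) < m then -k / (m + 1) else k - k / (m + 1)

section sumZeroProjLast

variable (m : ℕ)

theorem sum_sumZeroProjLast (k : ℂ) : ∑ j, sumZeroProjLast m k j = 0 := by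
  simp only [sumZeroProjLast, Fin.sum_ite_lt_last, nsmul_eq_mul]
  field_simp
  ring

theorem sum_exp_sumZeroProjLast {k : ℂ} (hk : exp k = -m) :
    ∑ j, exp (sumZeroProjLast m k j) = 0 := by
  simp only [sumZeroProjLast, apply_ite exp, Fin.sum_ite_lt_last, nsmul_eq_mul]
  rw [sub_eq_neg_add, neg_div, exp_add, hk]
  ring

theorem sum_norm_sq_sumZeroProjLast (k : ℂ) :
    ∑ j, ‖sumZeroProjLast m k j‖ ^ 2 = ‖k‖ ^ 2 * (1 - 1 / (m + 1)) := by
  have hm : ‖(m + 1 : ℂ)‖ = m + 1 := by exact_mod_cast norm_natCast (m + 1)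
  have hlast : k - k / (m + 1) = k * m / (m + 1) := by field_simp; ring
  simp only [sumZeroProjLast, apply_ite (‖·‖ ^ 2), Fin.sum_ite_lt_last, nsmul_eq_mul, hlast,
    norm_div, norm_neg, norm_mul, hm, norm_natCast]
  field_simp
  ring

end sumZeroProjLast

theorem point_Q_properties (n : ℕ) (hn : 2 ≤ n)
    (k : ℂ) (hk : k = Real.log (n - 1 : ℕ) + Real.pi * Complex.I)
    (b : EuclideanSpace ℂ (Fin n))
    (hb : ∀ j : Fin n, b j = if (j : ℕ) < n - 1 then -k / n else k - k / n) :
    (∑ j, Complex.exp (b j) = 0) ∧ (∑ j, b j = 0) ∧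
      (Metric.infDist b {p : EuclideanSpace ℂ (Fin n) | ∃ w : ℂ, ∀ j, p j = w}) ^ 2
        = ‖k‖ ^ 2 * (1 - 1 / n) := by
  obtain ⟨m, rfl⟩ : ∃ m, n = m + 1 := ⟨n - 1, by omega⟩
  have hQ : ∀ j, b j = sumZeroProjLast m k j := fun j => by simp [hb, sumZeroProjLast]
  have hsum : ∑ j, b j = 0 := by simp only [hQ, sum_sumZeroProjLast]
  have hexp : exp k = -m := by
    have hm : (0 : ℝ) < m := by exact_mod_cast (by omega : 0 < m)
    simpa [hk] using exp_log_add_pi_mul_I hm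
  refine ⟨by simp only [hQ, sum_exp_sumZeroProjLast m hexp], hsum, ?_⟩
  rw [EuclideanSpace.infDist_diagonal_eq_norm_of_sum_eq_zero hsum, EuclideanSpace.norm_sq_eq]
  simp only [hQ, sum_norm_sq_sumZeroProjLast]
  push_cast
  ring
end

section
/- Under the normalization ∑ⱼ zⱼ = 0 and the bound ∑ⱼ |zⱼ|² ≤ |k|²(1 − 1/n), with aⱼ = zⱼ − bⱼ, one has ∑ⱼ₌₁ⁿ |aⱼ|² ≤ 2|k||aₙ|. -/
/-! Expanding `‖z - b‖²`, the bound `∑ ‖z j‖² ≤ ∑ ‖b j‖²` gives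
`∑ ‖a j‖² ≤ 2 Re ∑ (b j - z j) * conj (b j)`. The vector `b` is the constant `-k/n` plus `k` at
the last index, and `b - z` sums to zero, so this sum collapses to `-aₙ * conj k`, whose real
part is at most `‖k‖ ‖aₙ‖`. The same collapse, applied to `b` itself, gives
`∑ ‖b j‖² = ‖k‖² (1 - 1/n)`. -/

open ComplexConjugate Finset

section
variable {ι : Type*} [Fintype ι]

theorem sum_norm_sub_sq_le_two_mul_re {z b : ι → ℂ}
    (h : ∑ j, ‖z j‖ ^ 2 ≤ ∑ j, ‖b j‖ ^ 2) :
    ∑ j, ‖z j - b j‖ ^ 2 ≤ 2 * (∑ j, (b j - z j) * conj (b j)).re := by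
  have expand : ∀ j, ‖z j - b j‖ ^ 2
      = 2 * ((b j - z j) * conj (b j)).re - ‖b j‖ ^ 2 + ‖z j‖ ^ 2 := by
    intro j
    simp only [Complex.sq_norm, Complex.normSq_sub, sub_mul, Complex.mul_conj, Complex.sub_re,
      Complex.ofReal_re]
    ring
  rw [Complex.re_sum, mul_sum, sum_congr rfl fun j _ => expand j, sum_add_distrib,
    sum_sub_distrib]
  linarith

theorem sum_sq_norm_eq_re_sum_mul_conj (b : ι → ℂ) :
    ∑ j, ‖b j‖ ^ 2 = (∑ j, b j * conj (b j)).re := by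
  simp [Complex.re_sum, Complex.mul_conj, Complex.sq_norm]

variable [DecidableEq ι] {b : ι → ℂ} {c d : ℂ} {i : ι}

theorem sum_eq_card_mul_add_of_eq_add_ite (hb : ∀ j, b j = c + if j = i then d else 0) :
    ∑ j, b j = Fintype.card ι * c + d := by
  simp [hb, sum_add_distrib]

theorem sum_mul_conj_of_eq_add_ite (hb : ∀ j, b j = c + if j = i then d else 0)
    {w : ι → ℂ} (hw : ∑ j, w j = 0) :
    ∑ j, w j * conj (b j) = w i * conj d := by
  simp [hb, mul_add, sum_add_distrib, ← sum_mul, hw, apply_ite conj, mul_ite]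

end

theorem lemma1_sum_sq_le (n : ℕ) (hn : 2 ≤ n)
    (k : ℂ)
    (b : Fin n → ℂ)
    (hb : ∀ j : Fin n, b j = if (j : ℕ) < n - 1 then -k / n else k - k / n)
    (z : Fin n → ℂ) (hzsum : ∑ j, z j = 0)
    (hznorm : ∑ j, ‖z j‖ ^ 2 ≤ ‖k‖ ^ 2 * (1 - 1 / n))
    (a : Fin n → ℂ) (ha : ∀ j, a j = z j - b j) :
    ∑ j, ‖a j‖ ^ 2 ≤ 2 * ‖k‖ * ‖a ⟨n - 1, by omega⟩‖ := by
  set last : Fin n := ⟨n - 1, by omega⟩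
  have hn0 : (n : ℂ) ≠ 0 := by exact_mod_cast (by omega : n ≠ 0)
  have hb' : ∀ j, b j = -k / n + if j = last then k else 0 := by
    intro j
    have hlast : j = last ↔ ¬(j : ℕ) < n - 1 := by rw [Fin.ext_iff]; grind
    rw [hb, if_congr hlast rfl rfl]
    split_ifs <;> ring
  have hbsum : ∑ j, b j = 0 := by
    rw [sum_eq_card_mul_add_of_eq_add_ite hb', Fintype.card_fin]
    field_simp
    ring
  have hbnorm : ∑ j, ‖b j‖ ^ 2 = ‖k‖ ^ 2 * (1 - 1 / n) := by
    rw [sum_sq_norm_eq_re_sum_mul_conj, sum_mul_conj_of_eq_add_ite hb' hbsum, hb' last,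
      if_pos rfl, show (-k / n + k) * conj k = k * conj k * (1 - 1 / n) by ring,
      Complex.mul_conj, Complex.normSq_eq_norm_sq, Complex.re_ofReal_mul]
    simp
  have hdiff : ∑ j, (b j - z j) = 0 := by rw [sum_sub_distrib, hbsum, hzsum, sub_zero]
  calc ∑ j, ‖a j‖ ^ 2 = ∑ j, ‖z j - b j‖ ^ 2 := by simp_rw [ha]
    _ ≤ 2 * (∑ j, (b j - z j) * conj (b j)).re :=
      sum_norm_sub_sq_le_two_mul_re (hbnorm ▸ hznorm)
    _ = 2 * (-a last * conj k).re := by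
      rw [sum_mul_conj_of_eq_add_ite hb' hdiff, ha, neg_sub]
    _ ≤ 2 * ‖k‖ * ‖a last‖ := by
      have := Complex.re_le_norm (-a last * conj k)
      rw [norm_mul, norm_neg, Complex.norm_conj] at this
      linarith
end

section
/- For every complex number w, |e^w − 1| ≥ |w|/2 whenever |w| ≤ 1, and consequently if (n−1)|e^{aₙ} − 1| ≤ C n^{0.75} + |aₙ| with |aₙ| ≤ π + log n and n sufficiently large, then the distance from aₙ to the set 2πiℤ is O(n^{−0.2}). -/
/-!
Both parts rest on the principal logarithm: if `‖exp a - 1‖ ≤ 1/2`, then `a` differs from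
`log (1 + (exp a - 1))` by an element of `2πiℤ`, and `‖log (1 + z)‖ ≤ 3/2 ‖z‖` for `‖z‖ ≤ 1/2`.
If `‖w‖ ≤ 1` and `‖exp w - 1‖ < ‖w‖/2`, this puts `w` within `3/4 ‖w‖` of `2πiℤ`, which is
impossible both for `0` and for the nonzero multiples, at distance `≥ 2π - 1` from `w`.
For the second part, `log n = O(n^{3/4})` turns the hypotheses into `‖exp a - 1‖ = O(n^{-1/4})`.
-/

open Real Filter

section
open Complex

theorem exists_int_norm_sub_two_pi_I_mul_le {a : ℂ} (ha : ‖exp a - 1‖ ≤ 1 / 2) :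
    ∃ m : ℤ, ‖a - 2 * π * I * m‖ ≤ 3 / 2 * ‖exp a - 1‖ := by
  have hlog : exp (log (1 + (exp a - 1))) = exp a := by
    rw [add_sub_cancel, exp_log (exp_ne_zero a)]
  obtain ⟨m, hm⟩ := exp_eq_exp_iff_exists_int.1 hlog.symm
  have hdist : a - 2 * π * I * m = log (1 + (exp a - 1)) := by linear_combination hm
  exact ⟨m, hdist ▸ norm_log_one_add_half_le_self ha⟩

theorem half_norm_le_norm_exp_sub_one {w : ℂ} (hw : ‖w‖ ≤ 1) : ‖w‖ / 2 ≤ ‖exp w - 1‖ := by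
  by_contra! hlt
  obtain ⟨m, hm⟩ := exists_int_norm_sub_two_pi_I_mul_le (hlt.le.trans (by linarith))
  have hclose : ‖w - 2 * π * I * m‖ < 3 / 4 * ‖w‖ := by linarith
  rcases eq_or_ne m 0 with rfl | hm0
  · simp only [Int.cast_zero, mul_zero, sub_zero] at hclose
    linarith [norm_nonneg w]
  · have hfar : 2 * π ≤ ‖2 * π * I * m‖ := by
      have : (1 : ℝ) ≤ |(m : ℝ)| := by exact_mod_cast Int.one_le_abs hm0
      simp only [norm_mul, Complex.norm_ofNat, norm_real, norm_eq_abs, abs_of_pos pi_pos, norm_I,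
        mul_one, norm_intCast]
      nlinarith [pi_pos]
    have := norm_sub_norm_le (2 * π * I * m) w
    rw [norm_sub_rev] at this
    linarith [pi_gt_three]

end

theorem pi_add_log_le_six_mul_rpow {x : ℝ} (hx : 1 ≤ x) : π + log x ≤ 6 * x ^ (3 / 4 : ℝ) := by
  have hlog : log x ≤ x ^ (3 / 4 : ℝ) / (3 / 4) := log_le_rpow_div (by linarith) (by norm_num)
  have hone : 1 ≤ x ^ (3 / 4 : ℝ) := one_le_rpow hx (by norm_num)
  linarith [pi_lt_four]

theorem le_two_mul_rpow_sub_one_of_sub_one_mul_le {x ε K p : ℝ} (hx : 2 ≤ x) (hε : 0 ≤ ε)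
    (h : (x - 1) * ε ≤ K * x ^ p) : ε ≤ 2 * K * x ^ (p - 1) := by
  have hx0 : 0 < x := by linarith
  have hsplit : x ^ p = x ^ (p - 1) * x := by
    rw [← rpow_add_one hx0.ne', sub_add_cancel]
  rw [hsplit] at h
  have : x * ε ≤ x * (2 * K * x ^ (p - 1)) := by nlinarith
  exact le_of_mul_le_mul_left this hx0

theorem lemma8_near_multiple_of_two_pi_i :
    (∀ w : ℂ, ‖w‖ ≤ 1 → ‖w‖ / 2 ≤ ‖Complex.exp w - 1‖) ∧
    ∀ C : ℝ, 0 < C → ∃ C' : ℝ, 0 < C' ∧ ∃ N : ℕ, ∀ n : ℕ, N ≤ n →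
      ∀ a : ℂ,
        ((n : ℝ) - 1) * ‖Complex.exp a - 1‖
            ≤ C * (n : ℝ) ^ (0.75 : ℝ) + ‖a‖ →
        ‖a‖ ≤ Real.pi + Real.log n →
        ∃ m : ℤ, ‖a - 2 * Real.pi * Complex.I * m‖
          ≤ C' * (n : ℝ) ^ (-0.2 : ℝ) := by
  refine ⟨fun w => half_norm_le_norm_exp_sub_one, fun C hC => ?_⟩
  have hsmall : ∀ᶠ n : ℕ in atTop, 2 * (C + 6) * (n : ℝ) ^ (3 / 4 - 1 : ℝ) < 1 / 2 := by
    have hlim := ((tendsto_rpow_neg_atTop (y := 1 / 4) (by norm_num)).comp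
      tendsto_natCast_atTop_atTop).const_mul (2 * (C + 6))
    rw [mul_zero] at hlim
    rw [show (3 / 4 - 1 : ℝ) = -(1 / 4) by norm_num]
    exact hlim.eventually_lt_const (by norm_num)
  obtain ⟨N, hN⟩ := eventually_atTop.1 (hsmall.and (eventually_ge_atTop 2))
  refine ⟨3 * (C + 6), by positivity, N, fun n hn a hexp ha => ?_⟩
  obtain ⟨hsmall_n, hn2⟩ := hN n hn
  have hn2' : (2 : ℝ) ≤ n := by exact_mod_cast hn2
  have hε : ‖Complex.exp a - 1‖ ≤ 2 * (C + 6) * (n : ℝ) ^ (3 / 4 - 1 : ℝ) := by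
    refine le_two_mul_rpow_sub_one_of_sub_one_mul_le hn2' (norm_nonneg _) ?_
    have := pi_add_log_le_six_mul_rpow (x := n) (by linarith)
    norm_num at hexp ⊢
    linarith
  obtain ⟨m, hm⟩ := exists_int_norm_sub_two_pi_I_mul_le (hε.trans hsmall_n.le)
  refine ⟨m, hm.trans ?_⟩
  calc 3 / 2 * ‖Complex.exp a - 1‖ ≤ 3 * (C + 6) * (n : ℝ) ^ (3 / 4 - 1 : ℝ) := by linarith
    _ ≤ 3 * (C + 6) * (n : ℝ) ^ (-0.2 : ℝ) := by
      gcongr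
      · linarith
      · norm_num
end
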